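/- Let g ∈ k[x₁,…,xₙ] be a polynomial of degree d and p ∈ V(g). Suppose there is a subset 𝓛 of the projective space ℙⁿ⁻¹ of directions of lines through p, dense in the Zariski topology, such that for every direction in 𝓛 the corresponding line l through p satisfies I_p(l, V(g)) = d. Then g vanishes at p with multiplicity exactly d; equivalently, g(x + p) is homogeneous of degree d. -/

import Mathlib

/-- The restriction of a polynomial `g` to the parametrized line `t ↦ p + t • v`,
as a polynomial in `t`. -/
noncomputable def lineEval {k : Type*} [Field k] {n : ℕ} (g : MvPolynomial (Fin n) k)
    (p v : Fin n → k) : Polynomial k :=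
  MvPolynomial.aeval (fun i => Polynomial.C (p i) + Polynomial.C (v i) * Polynomial.X) g

/-!
Write `h = g(x + p)` and `h_j` for its homogeneous components. On the line through `0` with
direction `v`, `h` restricts to `∑ⱼ h_j(v) tʲ`, which is `g(p + t v)`; so `I_p ≥ d` along `v`
forces `h_j(v) = 0` for `j < d`. Being homogeneous, such an `h_j` then vanishes on the whole
cone over `D`, and also at `0` since `h(0) = g(p) = 0`; density of the cone gives `h_j = 0`.
As translation does not raise the degree, `h = h_d`.
-/

namespace MvPolynomial

variable {σ R : Type*} [CommSemiring R]

theorem IsHomogeneous.aeval_C_mul_X {φ : MvPolynomial σ R} {j : ℕ} (hφ : φ.IsHomogeneous j)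
    (v : σ → R) :
    MvPolynomial.aeval (fun i => Polynomial.C (v i) * Polynomial.X) φ =
      Polynomial.C (eval v φ) * Polynomial.X ^ j := by
  rw [aeval_def, eval₂_eq, eval_eq, map_sum, Finset.sum_mul]
  refine Finset.sum_congr rfl fun m hm => ?_
  have hdeg : ∑ i ∈ m.support, m i = j := by
    simpa [Finsupp.weight_apply, Finsupp.sum] using hφ (mem_support_iff.mp hm)
  simp only [mul_pow, Finset.prod_mul_distrib, ← map_pow, ← map_prod,
    Finset.prod_pow_eq_pow_sum, hdeg]
  simp [mul_assoc]

theorem IsHomogeneous.eval_smul {φ : MvPolynomial σ R} {j : ℕ} (hφ : φ.IsHomogeneous j)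
    (c : R) (v : σ → R) : eval (c • v) φ = c ^ j * eval v φ := by
  have := congr_arg (Polynomial.eval c) (hφ.aeval_C_mul_X v)
  rw [← Polynomial.coe_aeval_eq_eval, comp_aeval_apply] at this
  simp only [map_mul, map_pow, Polynomial.aeval_C, Polynomial.aeval_X, Algebra.algebraMap_self,
    RingHom.id_apply, aeval_eq_eval] at this
  simpa [Pi.smul_def, mul_comm] using this

theorem coeff_aeval_C_mul_X (φ : MvPolynomial σ R) (v : σ → R) (j : ℕ) :
    (aeval (fun i => Polynomial.C (v i) * Polynomial.X) φ).coeff j =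
      eval v (homogeneousComponent j φ) := by
  conv_lhs => rw [← sum_homogeneousComponent φ]
  simp only [map_sum, (homogeneousComponent_isHomogeneous _ φ).aeval_C_mul_X,
    Polynomial.finsetSum_coeff, Polynomial.coeff_C_mul_X_pow, Finset.sum_ite_eq,
    Finset.mem_range]
  split_ifs with hj
  · rfl
  · rw [homogeneousComponent_eq_zero _ _ (by omega), map_zero]

theorem eval_zero_homogeneousComponent {φ : MvPolynomial σ R} (hφ : eval 0 φ = 0) (j : ℕ) :
    eval 0 (homogeneousComponent j φ) = 0 := by
  rw [eval_zero, constantCoeff_eq] at hφ ⊢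
  simp [coeff_homogeneousComponent, hφ]

theorem isHomogeneous_of_totalDegree_le {φ : MvPolynomial σ R} {n : ℕ}
    (hdeg : φ.totalDegree ≤ n) (hlow : ∀ j < n, homogeneousComponent j φ = 0) :
    φ.IsHomogeneous n := by
  intro m hm
  rw [Pi.one_def, ← Finsupp.degree_eq_weight_one]
  have hle : m.degree ≤ n := (le_totalDegree (mem_support_iff.mpr hm)).trans hdeg
  by_contra hne
  have := congr_arg (coeff m) (hlow _ (lt_of_le_of_ne hle hne))
  rw [coeff_homogeneousComponent, if_pos rfl, coeff_zero] at this
  exact hm this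

theorem totalDegree_aeval_le {τ : Type*} (f : σ → MvPolynomial τ R)
    (hf : ∀ i, (f i).totalDegree ≤ 1) (φ : MvPolynomial σ R) :
    (aeval f φ).totalDegree ≤ φ.totalDegree := by
  rw [aeval_def, eval₂_eq]
  refine totalDegree_finsetSum_le fun m hm => ?_
  calc (algebraMap R _ (coeff m φ) * ∏ i ∈ m.support, f i ^ m i).totalDegree
      ≤ ∑ i ∈ m.support, m i * (f i).totalDegree := by
        refine (totalDegree_mul _ _).trans ?_
        rw [algebraMap_eq, totalDegree_C, zero_add]
        exact (totalDegree_finsetProd _ _).trans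
          (Finset.sum_le_sum fun i _ => totalDegree_pow _ _)
    _ ≤ ∑ i ∈ m.support, m i :=
        Finset.sum_le_sum fun i _ => by simpa using Nat.mul_le_mul_left (m i) (hf i)
    _ ≤ φ.totalDegree := le_totalDegree hm

theorem eval_aeval_X_add_C (x p : σ → R) (φ : MvPolynomial σ R) :
    eval x (aeval (fun i => X i + C (p i)) φ) = eval (x + p) φ := by
  rw [← aeval_eq_eval (f := x), comp_aeval_apply]
  simp [Pi.add_def]

end MvPolynomial

open MvPolynomial

theorem lineEval_eq_aeval_C_mul_X {k : Type*} [Field k] {n : ℕ} (g : MvPolynomial (Fin n) k)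
    (p v : Fin n → k) :
    lineEval g p v = aeval (fun i => Polynomial.C (v i) * Polynomial.X)
      (aeval (fun i => X i + C (p i)) g) := by
  rw [comp_aeval_apply, lineEval]
  simp [add_comm]

theorem homogeneous_of_dense_max_intersection_multiplicity_general {k : Type*} [Field k]
    {n d : ℕ} (g : MvPolynomial (Fin n) k) (hdeg : g.totalDegree = d)
    (p : Fin n → k) (hp : MvPolynomial.eval p g = 0)
    (D : Set (Fin n → k))
    (hdense : MvPolynomial.vanishingIdeal k
      (insert (0 : Fin n → k) {y : Fin n → k | ∃ c : k, ∃ v ∈ D, y = c • v}) = ⊥)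
    (hI : ∀ v ∈ D, Polynomial.X ^ d ∣ lineEval g p v ∧
      ¬ Polynomial.X ^ (d + 1) ∣ lineEval g p v) :
    (MvPolynomial.aeval (fun i => MvPolynomial.X i + MvPolynomial.C (p i))
      g).IsHomogeneous d := by
  set h := aeval (fun i => X i + C (p i)) g
  have hdeg_le : h.totalDegree ≤ d :=
    hdeg ▸ totalDegree_aeval_le _ (fun i => (totalDegree_add _ _).trans (by simp)) g
  refine isHomogeneous_of_totalDegree_le hdeg_le fun j hj => ?_
  rw [← Ideal.mem_bot, ← hdense, mem_vanishingIdeal_iff]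
  rintro _ (rfl | ⟨c, v, hv, rfl⟩)
  · rw [aeval_eq_eval]
    exact eval_zero_homogeneousComponent (by rw [eval_aeval_X_add_C, zero_add, hp]) j
  · rw [aeval_eq_eval, (homogeneousComponent_isHomogeneous j h).eval_smul,
      ← coeff_aeval_C_mul_X, ← lineEval_eq_aeval_C_mul_X,
      Polynomial.X_pow_dvd_iff.mp (hI v hv).1 j hj, mul_zero]

/-- Let `g ∈ k[x₁,…,xₙ]` be a polynomial of degree `d` and `p ∈ V(g)`.  Suppose there is a
set `𝓛 = D` of (nonzero) directions of lines through `p`, dense in the Zariski topology of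
the projective space `ℙⁿ⁻¹` of directions (i.e. the affine cone over `D` is dense in `kⁿ`:
its vanishing ideal is zero), such that for every direction `v ∈ D` the line
`l = {p + t v}` satisfies `I_p(l, V(g)) = d` (the polynomial `g(p + t v) ∈ k[t]` vanishes
at `t = 0` to order exactly `d`).  Then `g` vanishes at `p` with multiplicity exactly `d`;
equivalently, `g(x + p)` is homogeneous of degree `d`. -/
theorem homogeneous_of_dense_max_intersection_multiplicity {k : Type*} [Field k]
    [IsAlgClosed k] {n d : ℕ} (g : MvPolynomial (Fin n) k) (hdeg : g.totalDegree = d)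
    (p : Fin n → k) (hp : MvPolynomial.eval p g = 0)
    (D : Set (Fin n → k)) (hD0 : ∀ v ∈ D, v ≠ 0)
    (hdense : MvPolynomial.vanishingIdeal k
      (insert (0 : Fin n → k) {y : Fin n → k | ∃ c : k, ∃ v ∈ D, y = c • v}) = ⊥)
    (hI : ∀ v ∈ D, Polynomial.X ^ d ∣ lineEval g p v ∧
      ¬ Polynomial.X ^ (d + 1) ∣ lineEval g p v) :
    (MvPolynomial.aeval (fun i => MvPolynomial.X i + MvPolynomial.C (p i))
      g).IsHomogeneous d :=
  homogeneous_of_dense_max_intersection_multiplicity_general g hdeg p hp D hdense hI
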